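/- Let α_1, …, α_n : Finset Q be tolerable finsets whose syndromes are separated, i.e. H_{α_1 Δ ⋯ Δ α_n} equals the subgroup of (Finset Q, Δ) generated by H_{α_1} ∪ ⋯ ∪ H_{α_n}, and set α := α_1 Δ ⋯ Δ α_n. Then for any choice of z_i ∈ E_{α_i} (i = 1, …, n), the finset z_1 Δ ⋯ Δ z_n Δ (Δ_{1 ≤ i < j ≤ n} (α_i ∩ α_j)) belongs to E_α. (Lemma 3(ii).) -/

import Mathlib

open Finset
open scoped symmDiff Matrix

namespace CC

variable {Q : Type*} [Fintype Q] [DecidableEq Q]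

/-- A subgroup of the abelian group `(Finset Q, ∆)`. -/
def IsSubgroup (S : Set (Finset Q)) : Prop :=
  ∅ ∈ S ∧ ∀ a ∈ S, ∀ b ∈ S, a ∆ b ∈ S

/-- The subgroup of `(Finset Q, ∆)` generated by a set. -/
def closure (T : Set (Finset Q)) : Set (Finset Q) :=
  ⋂₀ {S : Set (Finset Q) | IsSubgroup S ∧ T ⊆ S}

/-- A CSS stabilizer code on the qubits `Q`. -/
structure CSS (Q : Type*) [Fintype Q] [DecidableEq Q] where
  SX : Set (Finset Q)
  SZ : Set (Finset Q)
  hSX : IsSubgroup SX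
  hSZ : IsSubgroup SZ
  comm : ∀ a ∈ SZ, ∀ b ∈ SX, 2 ∣ (a ∩ b).card

def ZX (C : CSS Q) : Set (Finset Q) := {γ | ∀ f ∈ C.SZ, 2 ∣ (γ ∩ f).card}

def ZZ (C : CSS Q) : Set (Finset Q) := {z | ∀ c ∈ C.SX, 2 ∣ (z ∩ c).card}

/-- Duality assumption. -/
def Dual (C : CSS Q) : Prop :=
  C.SZ = {z | ∀ γ ∈ ZX C, 2 ∣ (z ∩ γ).card} ∧
  C.SX = {c | ∀ z ∈ ZZ C, 2 ∣ (c ∩ z).card}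

def LogicalX (C : CSS Q) (l : Finset Q) : Prop := l ∈ ZX C ∧ l ∉ C.SX

def LogicalZ (C : CSS Q) (l : Finset Q) : Prop := l ∈ ZZ C ∧ l ∉ C.SZ

/-- Single-logical-qubit assumption. -/
def SingleQubit (C : CSS Q) : Prop :=
  (ZX C ≠ C.SX ∧ ∀ l l', LogicalX C l → LogicalX C l' → l ∆ l' ∈ C.SX) ∧
  (ZZ C ≠ C.SZ ∧ ∀ l l', LogicalZ C l → LogicalZ C l' → l ∆ l' ∈ C.SZ)

/-- Intersection axiom. -/
def Inter (C : CSS Q) : Prop :=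
  ZZ C = {x | ∃ α ∈ ZX C, ∃ β ∈ ZX C, x = α ∩ β}

def G (C : CSS Q) (α : Finset Q) : Set (Finset Q) :=
  closure (C.SZ ∪ {x | ∃ β ∈ ZX C, x = α ∩ β})

def H (C : CSS Q) (α : Finset Q) : Set (Finset Q) :=
  closure (C.SZ ∪ {x | ∃ β ∈ C.SX, x = α ∩ β})

def Zof (K : Set (Finset Q)) : Set (Finset Q) := {γ | ∀ h ∈ K, 2 ∣ (γ ∩ h).card}

def Tolerable (C : CSS Q) (α : Finset Q) : Prop := ∀ z ∈ G C α, ¬ LogicalZ C z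

def g (b : Q → ℤ) (s : Finset Q) : ℤ := ∑ q ∈ s, b q

/-- T-invariance assumption. -/
def TInv (C : CSS Q) (b : Q → ℤ) : Prop :=
  (∀ β ∈ C.SX, (8 : ℤ) ∣ g b β) ∧
  (∀ β ∈ C.SX, ∀ γ ∈ ZX C, (8 : ℤ) ∣ (g b β - 2 * g b (γ ∩ β)))

def E (C : CSS Q) (b : Q → ℤ) (α : Finset Q) : Set (Finset Q) :=
  {z | ∀ γ ∈ Zof (G C α), g b (γ ∩ α) ≡ 2 * ((z ∩ γ).card : ℤ) [ZMOD 4]}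

/- Quantum setting -/

abbrev M (Q : Type*) [Fintype Q] [DecidableEq Q] :=
  Matrix (Q → ZMod 2) (Q → ZMod 2) ℂ

def supp (v : Q → ZMod 2) : Finset Q := Finset.univ.filter (fun q => v q = 1)

def ind (α : Finset Q) : Q → ZMod 2 := fun q => if q ∈ α then 1 else 0

def XM (α : Finset Q) : M Q :=
  Matrix.of fun u v => if u = v + ind α then (1 : ℂ) else 0

noncomputable def ZM (α : Finset Q) : M Q :=
  Matrix.diagonal fun v => (-1 : ℂ) ^ (supp v ∩ α).card

noncomputable def AM (b : Q → ℤ) (α : Finset Q) : M Q :=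
  Matrix.diagonal fun v => Complex.I ^ (g b (α ∩ supp v))

noncomputable def UM (b : Q → ℤ) : M Q :=
  Matrix.diagonal fun v => Complex.exp (Real.pi * Complex.I / 4) ^ (g b (supp v))

def Encoded (C : CSS Q) (ρ : M Q) : Prop :=
  ρ.trace = 1 ∧
  (∀ c ∈ C.SX, XM c * ρ = ρ ∧ ρ * XM c = ρ) ∧
  (∀ f ∈ C.SZ, ZM f * ρ = ρ ∧ ρ * ZM f = ρ)

instance : Std.Commutative (α := Finset Q) (· ∆ ·) := ⟨symmDiff_comm⟩
instance : Std.Associative (α := Finset Q) (· ∆ ·) := ⟨symmDiff_assoc⟩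

/-- Iterated symmetric difference over a finite index set. -/
def bigΔ {ι : Type*} (s : Finset ι) (f : ι → Finset Q) : Finset Q :=
  s.fold (· ∆ ·) ∅ f

/-! If `γ` commutes with `G_α`, it commutes with every `α_i ∩ c`, `c ∈ S_X`, since separation
puts `H_{α_i}` inside `H_α ⊆ G_α`. So `α_i ∩ γ` is a Z-type operator in `G_{α_i}` commuting with
`S_X`, and tolerability of `α_i` forces it into `S_Z`. As `γ ∩ (α_i ∩ β) = β ∩ (α_i ∩ γ)`, `γ`
then commutes with `G_{α_i}`, and the hypothesis `z_i ∈ E_{α_i}` applies to `γ`. What remains is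
arithmetic modulo 4: since every `b q` is odd, `g(u ∆ v) ≡ g u + g v + 2 |u ∩ v|`, and
`X ↦ 2 |X ∩ γ|` is additive for `∆`, so adding the `α_i` one at a time produces exactly the cross
terms `α_i ∩ α_j`. -/

section SymmDiff

omit [Fintype Q]

lemma inter_symmDiff_distrib_left (s t u : Finset Q) : s ∩ t ∆ u = (s ∩ t) ∆ (s ∩ u) :=
  inf_symmDiff_distrib_left s t u

lemma inter_symmDiff_distrib_right (s t u : Finset Q) : s ∆ t ∩ u = (s ∩ u) ∆ (t ∩ u) :=
  inf_symmDiff_distrib_right s t u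

lemma subset_closure (T : Set (Finset Q)) : T ⊆ closure T :=
  fun _ hx _ hS => hS.2 hx

lemma closure_subset {T S : Set (Finset Q)} (hS : IsSubgroup S) (hTS : T ⊆ S) :
    closure T ⊆ S :=
  Set.sInter_subset_of_mem ⟨hS, hTS⟩

lemma isSubgroup_closure (T : Set (Finset Q)) : IsSubgroup (closure T) :=
  ⟨fun _ hS => hS.1.1, fun _ ha _ hb S hS => hS.1.2 _ (ha S hS) _ (hb S hS)⟩

lemma g_symmDiff_add_two_mul_g_inter (b : Q → ℤ) (u v : Finset Q) :
    g b (u ∆ v) + 2 * g b (u ∩ v) = g b u + g b v := by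
  have hu : g b (u ∩ v) + g b (u \ v) = g b u := sum_inter_add_sum_sdiff u v b
  have hv : g b (u ∩ v) + g b (v \ u) = g b v := by
    rw [inter_comm]; exact sum_inter_add_sum_sdiff v u b
  have huv : g b (u ∆ v) = g b (u \ v) + g b (v \ u) := by
    rw [symmDiff_def, sup_eq_union]
    exact sum_union disjoint_sdiff_sdiff
  linarith

lemma card_symmDiff_add_two_mul_card_inter (u v : Finset Q) :
    ((u ∆ v).card : ℤ) + 2 * (u ∩ v).card = u.card + v.card := by
  simpa [g] using g_symmDiff_add_two_mul_g_inter (fun _ => (1 : ℤ)) u v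

omit [DecidableEq Q] in
lemma two_mul_g_modEq_two_mul_card {b : Q → ℤ} (hb : ∀ q, Odd (b q)) (u : Finset Q) :
    2 * g b u ≡ 2 * u.card [ZMOD 4] := by
  have hodd : (2 : ℤ) ∣ g b u - u.card := by
    rw [card_eq_sum_ones, Nat.cast_sum, g, ← sum_sub_distrib]
    exact dvd_sum fun q _ => by obtain ⟨k, hk⟩ := hb q; omega
  exact (Int.modEq_iff_dvd.2 (by omega)).symm

lemma g_symmDiff_modEq {b : Q → ℤ} (hb : ∀ q, Odd (b q)) (u v : Finset Q) :
    g b (u ∆ v) ≡ g b u + g b v + 2 * (u ∩ v).card [ZMOD 4] := by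
  have h := two_mul_g_modEq_two_mul_card hb (u ∩ v)
  have := g_symmDiff_add_two_mul_g_inter b u v
  rw [Int.ModEq] at h ⊢
  omega

lemma two_mul_card_symmDiff_inter_modEq (X Y γ : Finset Q) :
    2 * (((X ∆ Y) ∩ γ).card : ℤ) ≡ 2 * (X ∩ γ).card + 2 * (Y ∩ γ).card [ZMOD 4] := by
  have := card_symmDiff_add_two_mul_card_inter (X ∩ γ) (Y ∩ γ)
  rw [inter_symmDiff_distrib_right, Int.ModEq]
  omega

lemma isSubgroup_setOf_even_card_inter (γ : Finset Q) :
    IsSubgroup {h : Finset Q | 2 ∣ (γ ∩ h).card} := by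
  refine ⟨by simp, fun a (ha : 2 ∣ _) c (hc : 2 ∣ _) => ?_⟩
  have := card_symmDiff_add_two_mul_card_inter (γ ∩ a) (γ ∩ c)
  show 2 ∣ (γ ∩ a ∆ c).card
  rw [inter_symmDiff_distrib_left]
  omega

lemma mem_Zof_closure {γ : Finset Q} {T : Set (Finset Q)} (h : ∀ t ∈ T, 2 ∣ (γ ∩ t).card) :
    γ ∈ Zof (closure T) :=
  fun _ ht => closure_subset (isSubgroup_setOf_even_card_inter γ) h ht

end SymmDiff

section BigSymmDiff

variable {ι : Type*}

lemma bigΔ_insert [DecidableEq ι] {a : ι} {s : Finset ι} (ha : a ∉ s) (f : ι → Finset Q) :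
    bigΔ (insert a s) f = f a ∆ bigΔ s f :=
  fold_insert ha

lemma bigΔ_union [DecidableEq ι] {s t : Finset ι} (h : Disjoint s t) (f : ι → Finset Q) :
    bigΔ (s ∪ t) f = bigΔ s f ∆ bigΔ t f := by
  have := fold_union_inter (op := ((· ∆ ·) : Finset Q → Finset Q → Finset Q)) (s₁ := s)
    (s₂ := t) (b₁ := ∅) (b₂ := ∅) (f := f)
  rw [disjoint_iff_inter_eq_empty.1 h, fold_empty] at this
  exact (symmDiff_bot _).symm.trans this

lemma bigΔ_image {κ : Type*} [DecidableEq κ] {e : ι → κ} {s : Finset ι} (he : Set.InjOn e s)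
    (f : κ → Finset Q) : bigΔ (s.image e) f = bigΔ s (f ∘ e) :=
  fold_image he

lemma bigΔ_inter_right (s : Finset ι) (f : ι → Finset Q) (c : Finset Q) :
    bigΔ s (fun i => f i ∩ c) = bigΔ s f ∩ c := by
  have := fold_hom (s := s) (op := ((· ∆ ·) : Finset Q → Finset Q → Finset Q)) (b := ∅)
    (f := f) (m := (· ∩ c)) fun x y => inter_symmDiff_distrib_right x y c
  rwa [empty_inter] at this

lemma filter_lt_product_insert_of_forall_lt [LinearOrder ι] {a : ι} {s : Finset ι}
    (hlt : ∀ x ∈ s, x < a) :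
    ((insert a s ×ˢ insert a s).filter fun p => p.1 < p.2) =
      ((s ×ˢ s).filter fun p => p.1 < p.2) ∪ s.image (·, a) := by
  ext ⟨i, j⟩
  simp only [mem_filter, mem_product, mem_insert, mem_union, mem_image, Prod.mk.injEq]
  constructor
  · rintro ⟨⟨rfl | hi, rfl | hj⟩, hij⟩
    · exact absurd hij (lt_irrefl _)
    · exact absurd (hlt j hj) hij.not_gt
    · exact Or.inr ⟨i, hi, rfl, rfl⟩
    · exact Or.inl ⟨⟨hi, hj⟩, hij⟩
  · rintro (⟨⟨hi, hj⟩, hij⟩ | ⟨k, hk, rfl, rfl⟩)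
    · exact ⟨⟨Or.inr hi, Or.inr hj⟩, hij⟩
    · exact ⟨⟨Or.inr hk, Or.inl rfl⟩, hlt k hk⟩

lemma bigΔ_pairs_insert_of_forall_lt [LinearOrder ι] (αs : ι → Finset Q) {a : ι}
    {s : Finset ι} (hlt : ∀ x ∈ s, x < a) :
    bigΔ ((insert a s ×ˢ insert a s).filter fun p => p.1 < p.2) (fun p => αs p.1 ∩ αs p.2) =
      bigΔ ((s ×ˢ s).filter fun p => p.1 < p.2) (fun p => αs p.1 ∩ αs p.2) ∆
        (bigΔ s αs ∩ αs a) := by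
  have hdisj : Disjoint ((s ×ˢ s).filter fun p => p.1 < p.2) (s.image (·, a)) := by
    refine disjoint_left.2 fun p hp hp' => ?_
    obtain ⟨k, -, rfl⟩ := mem_image.1 hp'
    exact (hlt _ (mem_product.1 (mem_filter.1 hp).1).2).false
  rw [filter_lt_product_insert_of_forall_lt hlt, bigΔ_union hdisj,
    bigΔ_image fun _ _ _ _ h => congrArg Prod.fst h]
  exact congrArg _ (bigΔ_inter_right s αs (αs a))

lemma g_inter_bigΔ_modEq [LinearOrder ι] {b : Q → ℤ} (hb : ∀ q, Odd (b q))
    (αs zs : ι → Finset Q) {γ : Finset Q}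
    (h : ∀ i, g b (γ ∩ αs i) ≡ 2 * ((zs i ∩ γ).card : ℤ) [ZMOD 4]) (s : Finset ι) :
    g b (γ ∩ bigΔ s αs) ≡
      2 * (((bigΔ s zs ∆ bigΔ ((s ×ˢ s).filter fun p => p.1 < p.2)
        (fun p => αs p.1 ∩ αs p.2)) ∩ γ).card : ℤ) [ZMOD 4] := by
  induction s using Finset.induction_on_max with
  | empty => simp [bigΔ, g]
  | insert a s hlt ih =>
    have ha : a ∉ s := fun has => lt_irrefl a (hlt a has)
    rw [bigΔ_insert ha, bigΔ_insert ha, bigΔ_pairs_insert_of_forall_lt αs hlt]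
    set A := bigΔ s αs
    set Z := bigΔ s zs
    set P := bigΔ ((s ×ˢ s).filter fun p => p.1 < p.2) (fun p => αs p.1 ∩ αs p.2)
    have hcross : γ ∩ αs a ∩ (γ ∩ A) = A ∩ αs a ∩ γ := by
      ext; simp only [mem_inter]; tauto
    calc g b (γ ∩ (αs a ∆ A))
        = g b ((γ ∩ αs a) ∆ (γ ∩ A)) := by rw [inter_symmDiff_distrib_left]
      _ ≡ g b (γ ∩ αs a) + g b (γ ∩ A) + 2 * (A ∩ αs a ∩ γ).card [ZMOD 4] := by
        rw [← hcross]; exact g_symmDiff_modEq hb _ _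
      _ ≡ 2 * (zs a ∩ γ).card + 2 * ((Z ∆ P) ∩ γ).card + 2 * (A ∩ αs a ∩ γ).card [ZMOD 4] :=
        ((h a).add ih).add_right _
      _ ≡ 2 * (zs a ∩ γ).card + 2 * ((Z ∆ P ∆ (A ∩ αs a)) ∩ γ).card [ZMOD 4] := by
        rw [add_assoc]; exact (two_mul_card_symmDiff_inter_modEq _ _ _).symm.add_left _
      _ ≡ 2 * ((zs a ∆ (Z ∆ P ∆ (A ∩ αs a))) ∩ γ).card [ZMOD 4] :=
        (two_mul_card_symmDiff_inter_modEq _ _ _).symm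
      _ = 2 * (((zs a ∆ Z ∆ (P ∆ (A ∩ αs a))) ∩ γ).card : ℤ) := by
        simp only [symmDiff_assoc]

end BigSymmDiff

lemma SX_subset_ZX (C : CSS Q) : C.SX ⊆ ZX C :=
  fun c hc f hf => by rw [inter_comm]; exact C.comm f hf c hc

lemma H_subset_G (C : CSS Q) (α : Finset Q) : H C α ⊆ G C α := by
  refine closure_subset (isSubgroup_closure _) ?_
  rintro x (hx | ⟨β, hβ, rfl⟩)
  · exact subset_closure _ (Or.inl hx)
  · exact subset_closure _ (Or.inr ⟨β, SX_subset_ZX C hβ, rfl⟩)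

lemma Zof_G_subset_ZX (C : CSS Q) (α : Finset Q) : Zof (G C α) ⊆ ZX C :=
  fun _ hγ f hf => hγ f (subset_closure _ (Or.inl hf))

lemma inter_mem_SZ_of_mem_Zof_G {C : CSS Q} {a α γ : Finset Q} (htol : Tolerable C a)
    (hHG : H C a ⊆ G C α) (hγ : γ ∈ Zof (G C α)) : a ∩ γ ∈ C.SZ := by
  have hZZ : a ∩ γ ∈ ZZ C := fun c hc => by
    rw [inter_right_comm, inter_comm]
    exact hγ _ (hHG (subset_closure _ (Or.inr ⟨c, hc, rfl⟩)))
  by_contra hSZ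
  exact htol _ (subset_closure _ (Or.inr ⟨γ, Zof_G_subset_ZX C α hγ, rfl⟩)) ⟨hZZ, hSZ⟩

lemma mem_Zof_G_of_tolerable {C : CSS Q} {a α γ : Finset Q} (htol : Tolerable C a)
    (hHG : H C a ⊆ G C α) (hγ : γ ∈ Zof (G C α)) : γ ∈ Zof (G C a) := by
  have hγZX := Zof_G_subset_ZX C α hγ
  refine mem_Zof_closure ?_
  rintro t (ht | ⟨β, hβ, rfl⟩)
  · exact hγZX t ht
  · rw [inter_left_comm, inter_comm γ, ← inter_left_comm]
    exact hβ _ (inter_mem_SZ_of_mem_Zof_G htol hHG hγ)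

theorem E_factorization_general
    (C : CSS Q) (b : Q → ℤ) (hb : ∀ q, Odd (b q))
    (n : ℕ) (αs : Fin n → Finset Q) (htol : ∀ i, Tolerable C (αs i))
    (hsep : H C (bigΔ Finset.univ αs) = closure (⋃ i, H C (αs i)))
    (zs : Fin n → Finset Q) (hz : ∀ i, zs i ∈ E C b (αs i)) :
    bigΔ Finset.univ zs ∆
        bigΔ (Finset.univ.filter fun p : Fin n × Fin n => p.1 < p.2)
          (fun p => αs p.1 ∩ αs p.2)
      ∈ E C b (bigΔ Finset.univ αs) := by
  intro γ hγ
  have hHG : ∀ i, H C (αs i) ⊆ G C (bigΔ univ αs) := fun i =>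
    calc H C (αs i) ⊆ closure (⋃ i, H C (αs i)) :=
          (Set.subset_iUnion (fun i => H C (αs i)) i).trans (subset_closure _)
      _ = H C (bigΔ univ αs) := hsep.symm
      _ ⊆ G C (bigΔ univ αs) := H_subset_G C _
  have hmod (i : Fin n) := hz i γ (mem_Zof_G_of_tolerable (htol i) (hHG i) hγ)
  simpa only [univ_product_univ] using g_inter_bigΔ_modEq hb αs zs hmod univ

/-- Lemma 3(ii): factorization of the propagated-error coset over separated syndromes. -/
theorem E_factorization
    (C : CSS Q) (b : Q → ℤ) (hb : ∀ q, Odd (b q))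
    (hdual : Dual C) (hsingle : SingleQubit C) (hinter : Inter C) (htinv : TInv C b)
    (n : ℕ) (αs : Fin n → Finset Q) (htol : ∀ i, Tolerable C (αs i))
    (hsep : H C (bigΔ Finset.univ αs) = closure (⋃ i, H C (αs i)))
    (zs : Fin n → Finset Q) (hz : ∀ i, zs i ∈ E C b (αs i)) :
    bigΔ Finset.univ zs ∆
        bigΔ (Finset.univ.filter fun p : Fin n × Fin n => p.1 < p.2)
          (fun p => αs p.1 ∩ αs p.2)
      ∈ E C b (bigΔ Finset.univ αs) :=
  E_factorization_general C b hb n αs htol hsep zs hz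

end CC
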